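/- Let ρ ≥ 1 be a real number. There exists a constant C > 0 such that for every x ∈ ℝ² with ‖x‖ ≥ 2, ∫_{{y : ‖x−y‖ ≤ ‖x‖/2}} ‖x−y‖^{−1}·‖y‖^{−2(ρ+1)} dy ≤ C·‖x‖^{−(2ρ+1)}. -/

import Mathlib

/-!
On the disc `‖x - y‖ ≤ R := ‖x‖ / 2` we have `‖y‖ ≥ R`, so the factor `‖y‖ ^ (-2(ρ+1))` is at most
`R ^ (-2(ρ+1))`. The remaining integral of `‖x - y‖⁻¹` over the disc is `R * K` after the change of
variables `z = (x - y) / R`, where `K = ∫_{‖z‖ ≤ 1} ‖z‖⁻¹ dz` is finite because in polar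
coordinates the weight `r` cancels the singularity `r⁻¹`. Hence the integral is at most
`K * R ^ (-(2ρ+1)) = 2 ^ (2ρ+1) * K * ‖x‖ ^ (-(2ρ+1))`.
-/

open MeasureTheory

abbrev E2 := EuclideanSpace ℝ (Fin 2)

open Metric Module

theorem rpow_norm_le_of_norm_sub_le_half {F : Type*} [SeminormedAddCommGroup F] {x y : F}
    (hx : 0 < ‖x‖) {p : ℝ} (hp : p ≤ 0) (h : ‖x - y‖ ≤ ‖x‖ / 2) :
    ‖y‖ ^ p ≤ (‖x‖ / 2) ^ p :=
  Real.rpow_le_rpow_of_nonpos (by positivity) (by linarith [norm_sub_norm_le x y]) hp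

section AddHaar

variable {E : Type*} [NormedAddCommGroup E] [NormedSpace ℝ E] [MeasurableSpace E] [BorelSpace E]
  [FiniteDimensional ℝ E] (μ : Measure E) [μ.IsAddHaarMeasure]

theorem setLIntegral_closedBall_comp_sub_left (f : E → ENNReal) (x : E) (r : ℝ) :
    ∫⁻ y in closedBall x r, f (x - y) ∂μ = ∫⁻ z in closedBall 0 r, f z ∂μ := by
  have hpre : (x - ·) ⁻¹' closedBall 0 r = closedBall x r := by
    ext y; simp [dist_eq_norm, norm_sub_rev]
  rw [← hpre]
  exact (μ.measurePreserving_sub_left x).setLIntegral_comp_preimage_emb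
    (Homeomorph.subLeft x).measurableEmbedding f _

theorem setLIntegral_closedBall_zero_rpow_norm {r : ℝ} (hr : 0 < r) (s : ℝ) :
    ∫⁻ z in closedBall 0 r, ENNReal.ofReal (‖z‖ ^ s) ∂μ
      = ENNReal.ofReal (r ^ (s + finrank ℝ E)) *
          ∫⁻ z in closedBall 0 1, ENNReal.ofReal (‖z‖ ^ s) ∂μ := by
  have hpre : (r • ·) ⁻¹' closedBall (0 : E) r = closedBall 0 1 := by
    ext z; simp [norm_smul, abs_of_pos hr, hr]
  have hμ : μ = ENNReal.ofReal (r ^ finrank ℝ E) • μ.map (r • ·) := by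
    rw [μ.map_addHaar_smul hr.ne', smul_smul, ← ENNReal.ofReal_mul (by positivity),
      abs_of_pos (by positivity), mul_inv_cancel₀ (by positivity), ENNReal.ofReal_one, one_smul]
  calc ∫⁻ z in closedBall 0 r, ENNReal.ofReal (‖z‖ ^ s) ∂μ
      = ENNReal.ofReal (r ^ finrank ℝ E) *
          ∫⁻ z in (r • ·) ⁻¹' closedBall 0 r, ENNReal.ofReal (‖r • z‖ ^ s) ∂μ := by
        conv_lhs => rw [hμ]
        rw [Measure.restrict_smul, lintegral_smul_measure, smul_eq_mul,
          setLIntegral_map measurableSet_closedBall (by fun_prop) (measurable_const_smul r)]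
    _ = _ := by
        simp_rw [hpre, norm_smul, Real.norm_of_nonneg hr.le,
          Real.mul_rpow hr.le (norm_nonneg _), ENNReal.ofReal_mul (Real.rpow_nonneg hr.le _)]
        rw [lintegral_const_mul' _ _ ENNReal.ofReal_ne_top, ← mul_assoc,
          ← ENNReal.ofReal_mul (by positivity), Real.rpow_add hr, Real.rpow_natCast,
          mul_comm (r ^ s)]

theorem setLIntegral_closedBall_rpow_norm_sub (x : E) {r : ℝ} (hr : 0 < r) (s : ℝ) :
    ∫⁻ y in closedBall x r, ENNReal.ofReal (‖x - y‖ ^ s) ∂μ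
      = ENNReal.ofReal (r ^ (s + finrank ℝ E)) *
          ∫⁻ z in closedBall 0 1, ENNReal.ofReal (‖z‖ ^ s) ∂μ := by
  rw [setLIntegral_closedBall_comp_sub_left μ (fun z ↦ ENNReal.ofReal (‖z‖ ^ s)),
    setLIntegral_closedBall_zero_rpow_norm μ hr]

theorem setLIntegral_closedBall_rpow_norm_lt_top [Nontrivial E] {s : ℝ}
    (hs : -(finrank ℝ E : ℝ) < s) :
    ∫⁻ z in closedBall 0 1, ENNReal.ofReal (‖z‖ ^ s) ∂μ < ⊤ := by
  have hd : 1 ≤ finrank ℝ E := finrank_pos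
  have hradial : IntegrableOn (fun y : ℝ ↦ y ^ (finrank ℝ E - 1) • y ^ s) (Set.Ioo 0 2) := by
    refine ((intervalIntegral.integrableOn_Ioo_rpow_iff (s := s + (finrank ℝ E - 1 : ℕ))
      two_pos).2 ?_).congr_fun (fun y hy ↦ ?_) measurableSet_Ioo
    · push_cast [hd]; linarith
    · simp only [smul_eq_mul, Real.rpow_add hy.1, Real.rpow_natCast, mul_comm]
  have hball : IntegrableOn (fun z : E ↦ ‖z‖ ^ s) (ball 0 2) μ :=
    (integrableOn_fun_norm_addHaar μ).2 hradial
  exact (hball.mono_set (closedBall_subset_ball one_lt_two)).lintegral_lt_top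

theorem setLIntegral_closedBall_half_rpow_norm_sub_mul_rpow_norm_le {x : E} (hx : x ≠ 0)
    {p : ℝ} (hp : p ≤ 0) (s : ℝ) :
    ∫⁻ y in closedBall x (‖x‖ / 2), ENNReal.ofReal (‖x - y‖ ^ s * ‖y‖ ^ p) ∂μ
      ≤ ENNReal.ofReal ((‖x‖ / 2) ^ (p + s + finrank ℝ E)) *
          ∫⁻ z in closedBall 0 1, ENNReal.ofReal (‖z‖ ^ s) ∂μ := by
  have hR : 0 < ‖x‖ / 2 := by positivity
  calc ∫⁻ y in closedBall x (‖x‖ / 2), ENNReal.ofReal (‖x - y‖ ^ s * ‖y‖ ^ p) ∂μ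
      ≤ ∫⁻ y in closedBall x (‖x‖ / 2),
          ENNReal.ofReal ((‖x‖ / 2) ^ p) * ENNReal.ofReal (‖x - y‖ ^ s) ∂μ := by
        refine setLIntegral_mono' measurableSet_closedBall fun y hy ↦ ?_
        rw [← ENNReal.ofReal_mul (by positivity), mul_comm (‖x - y‖ ^ s)]
        refine ENNReal.ofReal_le_ofReal (mul_le_mul_of_nonneg_right ?_ (by positivity))
        exact rpow_norm_le_of_norm_sub_le_half (norm_pos_iff.2 hx) hp
          (by simpa [dist_eq_norm, norm_sub_rev] using hy)
    _ = _ := by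
        rw [lintegral_const_mul' _ _ ENNReal.ofReal_ne_top,
          setLIntegral_closedBall_rpow_norm_sub μ x hR, ← mul_assoc,
          ← ENNReal.ofReal_mul (by positivity), ← Real.rpow_add hR, add_assoc]

end AddHaar

theorem stmt17 (ρ : ℝ) (hρ : 1 ≤ ρ) :
    ∃ C : ℝ, 0 < C ∧ ∀ x : E2, 2 ≤ ‖x‖ →
      ∫⁻ y in {y : E2 | ‖x - y‖ ≤ ‖x‖ / 2},
          ENNReal.ofReal (‖x - y‖⁻¹ * ‖y‖ ^ (-(2 * (ρ + 1))))
        ≤ ENNReal.ofReal (C * ‖x‖ ^ (-(2 * ρ + 1))) := by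
  set K := ∫⁻ z in closedBall (0 : E2) 1, ENNReal.ofReal (‖z‖ ^ (-1 : ℝ))
  have hK : K ≠ ⊤ := (setLIntegral_closedBall_rpow_norm_lt_top volume
    (by norm_num [finrank_euclideanSpace])).ne
  -- `+ 1` keeps `C` positive without having to show `K ≠ 0`
  refine ⟨2 ^ (2 * ρ + 1) * (K.toReal + 1), by positivity, fun x hx ↦ ?_⟩
  have hx0 : x ≠ 0 := norm_pos_iff.1 (by linarith)
  have hdomain : {y : E2 | ‖x - y‖ ≤ ‖x‖ / 2} = closedBall x (‖x‖ / 2) := by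
    ext y; simp [dist_eq_norm, norm_sub_rev]
  have hpow : (‖x‖ / 2) ^ (-(2 * (ρ + 1)) + -1 + (finrank ℝ E2 : ℝ))
      = 2 ^ (2 * ρ + 1) * ‖x‖ ^ (-(2 * ρ + 1)) := by
    rw [finrank_euclideanSpace_fin, show -(2 * (ρ + 1)) + -1 + ((2 : ℕ) : ℝ) = -(2 * ρ + 1) by
      push_cast; ring, Real.div_rpow (norm_nonneg x) zero_le_two, Real.rpow_neg zero_le_two,
      div_inv_eq_mul, mul_comm]
  calc ∫⁻ y in {y : E2 | ‖x - y‖ ≤ ‖x‖ / 2}, ENNReal.ofReal (‖x - y‖⁻¹ * ‖y‖ ^ (-(2 * (ρ + 1))))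
      = ∫⁻ y in closedBall x (‖x‖ / 2),
          ENNReal.ofReal (‖x - y‖ ^ (-1 : ℝ) * ‖y‖ ^ (-(2 * (ρ + 1)))) := by
        simp_rw [hdomain, Real.rpow_neg_one]
    _ ≤ ENNReal.ofReal (2 ^ (2 * ρ + 1) * ‖x‖ ^ (-(2 * ρ + 1))) * ENNReal.ofReal K.toReal := by
        rw [← hpow, ENNReal.ofReal_toReal hK]
        exact setLIntegral_closedBall_half_rpow_norm_sub_mul_rpow_norm_le volume hx0
          (by linarith) _
    _ ≤ ENNReal.ofReal (2 ^ (2 * ρ + 1) * ‖x‖ ^ (-(2 * ρ + 1))) *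
          ENNReal.ofReal (K.toReal + 1) := by
        gcongr; linarith
    _ = ENNReal.ofReal (2 ^ (2 * ρ + 1) * (K.toReal + 1) * ‖x‖ ^ (-(2 * ρ + 1))) := by
        rw [← ENNReal.ofReal_mul (by positivity), mul_right_comm]
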